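/- arXiv:1909.00802 — 2 statements merged into one kernel-verified Lean document; each statement's English description precedes it below -/
import Mathlib

section
/- Let f(x) = -x + b₀x^{q³} + b₁x^q ∈ F_{q⁴}[x] with b₀,b₁ ≠ 0 and z = b₀/b₁. Then dim_{F_q} ker f = 2 if and only if N_{q⁴/q}(z) = 1 and b₁^{q+1} = 1/(z^q - z^{q²+q+1}). In particular, these conditions force N_{q⁴/q²}(z) ≠ 1. -/
/-!
Let `σ` be the `q`-Frobenius of `F = 𝔽_{q⁴}`. If `A` is the matrix of `f` in an `𝔽_q`-basis `b`
of `F`, the Dickson matrix `D` of `f` satisfies `D M = M A` for the Moore matrix `M = (σⁱ bⱼ)`,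
which is invertible because the powers of `σ` are linearly independent characters; hence `D`
and `f` have the same rank. The first two rows of `D` cut out a plane (as `b₀ ≠ 0`), so
`dim ker f = 2` exactly when the last two rows vanish on that plane. Up to applying `σ`, this is
the system `b₀^{1+q} + b₁^{q+q²} = 0`, `b₁ b₀^q + b₀^{q²} b₁^q = 1`, which the substitution
`b₀ = z b₁` turns into `N(z) = 1` and `b₁^{q+1} (z^q - z^{q²+q+1}) = 1`.
-/

open Module LinearMap FiniteField

theorem finrank_le_finrank_of_algebraMap_comp_mem {K L ι : Type*} [Field K] [Field L]
    [Algebra K L] [Finite ι] {W : Submodule K (ι → K)} {W' : Submodule L (ι → L)}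
    (h : ∀ w ∈ W, algebraMap K L ∘ w ∈ W') : finrank K W ≤ finrank L W' := by
  let b := finBasis K W
  have hli : LinearIndependent L fun i ↦ algebraMap K L ∘ (b i : ι → K) :=
    linearIndependent_algebraMap_comp_iff.mpr (b.linearIndependent.map' W.subtype W.ker_subtype)
  calc finrank K W = Fintype.card (Fin (finrank K W)) := (Fintype.card_fin _).symm
    _ = finrank L (Submodule.span L (Set.range _)) := (finrank_span_eq_card hli).symm
    _ ≤ finrank L W' := Submodule.finrank_mono <|
      Submodule.span_le.mpr (Set.range_subset_iff.mpr fun i ↦ h _ (b i).2)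

theorem finrank_eq_of_card_eq_pow {K V : Type*} [DivisionRing K] [AddCommGroup V] [Module K V]
    [Fintype K] [Fintype V] {q n : ℕ} (hK : Fintype.card K = q) (hV : Fintype.card V = q ^ n) :
    finrank K V = n :=
  Nat.pow_right_injective (hK ▸ Fintype.one_lt_card) <| show q ^ finrank K V = q ^ n by
    rw [← hK, ← card_eq_pow_finrank, hV, hK]

theorem Matrix.rank_map_algebraMap {K L m n : Type*} [Field K] [Field L] [Algebra K L]
    [Fintype m] [Fintype n] (A : Matrix m n K) : (A.map (algebraMap K L)).rank = A.rank := by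
  set A' := A.map (algebraMap K L)
  have hmap : ∀ v, algebraMap K L ∘ A.mulVec v = A'.mulVec (algebraMap K L ∘ v) :=
    fun v ↦ funext (RingHom.map_mulVec _ A v)
  have hrange : finrank K (range A.mulVecLin) ≤ finrank L (range A'.mulVecLin) :=
    finrank_le_finrank_of_algebraMap_comp_mem fun _ ⟨v, hv⟩ ↦
      ⟨algebraMap K L ∘ v, by simp [← hv, hmap]⟩
  have hker : finrank K (ker A.mulVecLin) ≤ finrank L (ker A'.mulVecLin) :=
    finrank_le_finrank_of_algebraMap_comp_mem fun v hv ↦ by simp_all [← hmap]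
  have h := finrank_range_add_finrank_ker A.mulVecLin
  have h' := finrank_range_add_finrank_ker A'.mulVecLin
  simp only [finrank_fintype_fun_eq_card] at h h'
  rw [Matrix.rank, Matrix.rank]
  omega

section Frobenius

variable {K L : Type*} [Field K] [Fintype K] [Field L] [Finite L] [Algebra K L]

theorem det_moore_ne_zero {n : ℕ} (b : Basis (Fin n) K L) :
    (Matrix.of fun i j : Fin n ↦ (frobeniusAlgHom K L ^ (i : ℕ)) (b j)).det ≠ 0 := by
  intro hdet
  obtain ⟨c, hc0, hc⟩ := Matrix.exists_vecMul_eq_zero_iff.mpr hdet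
  obtain rfl : finrank K L = n := (finrank_eq_card_basis b).trans (Fintype.card_fin n)
  refine hc0 (funext <| Fintype.linearIndependent_iff.mp
    ((linearIndependent_algHom_toLinearMap K L L).comp _ (bijective_frobeniusAlgHom_pow K L).1) c
    (b.ext fun j ↦ ?_))
  simpa [Matrix.vecMul, dotProduct] using congrFun hc j

theorem finrank_ker_eq_finrank_ker_of_dickson {n : ℕ} (hn : finrank K L = n) (f : L →ₗ[K] L)
    (D : Matrix (Fin n) (Fin n) L)
    (hD : ∀ i y, ∑ k, D i k * (frobeniusAlgHom K L ^ (k : ℕ)) y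
      = (frobeniusAlgHom K L ^ (i : ℕ)) (f y)) :
    finrank K (ker f) = finrank L (ker D.mulVecLin) := by
  let b := finBasisOfFinrankEq K L hn
  let A := toMatrix b b f
  let M := Matrix.of fun i j : Fin n ↦ (frobeniusAlgHom K L ^ (i : ℕ)) (b j)
  have hDM : D * M = M * A.map (algebraMap K L) := by
    ext i j
    have hf : f (b j) = ∑ k, A k j • b k := by simp [A, toMatrix_apply, b.sum_repr]
    simp only [Matrix.mul_apply, M, Matrix.of_apply, hD, hf, map_sum, Matrix.map_apply,
      Algebra.smul_def, map_mul, AlgHom.commutes, mul_comm]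
  have hrank : D.rank = finrank K (range f) := by
    rw [← Matrix.rank_mul_eq_left_of_det_ne_zero M D (det_moore_ne_zero b), hDM,
      Matrix.rank_mul_eq_right_of_det_ne_zero M _ (det_moore_ne_zero b),
      Matrix.rank_map_algebraMap, Matrix.rank_eq_finrank_range_toLin A b b, Matrix.toLin_toMatrix]
  have h := finrank_range_add_finrank_ker f
  have h' := finrank_range_add_finrank_ker D.mulVecLin
  simp only [finrank_fintype_fun_eq_card, Fintype.card_fin, hn] at h h'
  rw [Matrix.rank] at hrank
  omega

end Frobenius

section DicksonMatrix

variable {F : Type*} [Field F]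

/-- The Dickson matrix of `x ↦ -x + b₁ σ(x) + b₀ σ³(x)` for an automorphism `σ` of order
dividing `4`. -/
def dicksonMatrix (σ : F →+* F) (b0 b1 : F) : Matrix (Fin 4) (Fin 4) F :=
  !![-1, b1, 0, b0;
    σ b0, -1, σ b1, 0;
    0, σ (σ b0), -1, σ (σ b1);
    σ (σ (σ b1)), 0, σ (σ (σ b0)), -1]

theorem sum_dicksonMatrix_mul_pow_apply {K : Type*} [CommSemiring K] [Algebra K F]
    {φ : F →ₐ[K] F} (hφ : ∀ x, φ (φ (φ (φ x))) = x) (b0 b1 y : F) (i : Fin 4) :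
    ∑ k, dicksonMatrix φ.toRingHom b0 b1 i k * (φ ^ (k : ℕ)) y
      = (φ ^ (i : ℕ)) (-y + b1 * φ y + b0 * φ (φ (φ y))) := by
  fin_cases i <;> simp [Fin.sum_univ_four, dicksonMatrix, pow_succ, hφ] <;> ring

variable {σ : F →+* F} {b0 b1 : F}

theorem mem_ker_dicksonMatrix {v : Fin 4 → F} :
    v ∈ ker (dicksonMatrix σ b0 b1).mulVecLin ↔
      -v 0 + b1 * v 1 + b0 * v 3 = 0 ∧ σ b0 * v 0 - v 1 + σ b1 * v 2 = 0 ∧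
      σ (σ b0) * v 1 - v 2 + σ (σ b1) * v 3 = 0 ∧
      σ (σ (σ b1)) * v 0 + σ (σ (σ b0)) * v 2 - v 3 = 0 := by
  simp [dicksonMatrix, funext_iff, Fin.forall_fin_succ, dotProduct, Fin.sum_univ_four,
    ← sub_eq_add_neg]

theorem finrank_ker_dicksonMatrix_eq_two_iff_mem (hb0 : b0 ≠ 0) :
    finrank F (ker (dicksonMatrix σ b0 b1).mulVecLin) = 2 ↔
      ![b0, b0 * σ b0, 0, 1 - b1 * σ b0] ∈ ker (dicksonMatrix σ b0 b1).mulVecLin ∧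
      ![0, b0 * σ b1, b0, -(b1 * σ b1)] ∈ ker (dicksonMatrix σ b0 b1).mulVecLin := by
  set u : Fin 4 → F := ![b0, b0 * σ b0, 0, 1 - b1 * σ b0]
  set w : Fin 4 → F := ![0, b0 * σ b1, b0, -(b1 * σ b1)]
  set V := ker (dicksonMatrix σ b0 b1).mulVecLin
  -- `u` and `w` span the kernel of the first two rows
  have hle : V ≤ Submodule.span F {u, w} := by
    intro v hv
    obtain ⟨h0, h1, -, -⟩ := mem_ker_dicksonMatrix.mp hv
    refine (Submodule.smul_mem_iff _ hb0).mp (Submodule.mem_span_pair.mpr ⟨v 0, v 2, ?_⟩)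
    ext i
    fin_cases i <;> simp [u, w]
    · ring
    · linear_combination b0 * h1
    · ring
    · linear_combination -h0 - b1 * h1
  have hspan : finrank F (Submodule.span F {u, w}) = 2 := by
    rw [← Matrix.range_cons_cons_empty u w ![], finrank_span_eq_card, Fintype.card_fin]
    exact LinearIndependent.pair_iff.mpr fun s t hst ↦ by
      simpa [u, w, hb0] using And.intro (congrFun hst 0) (congrFun hst 2)
  constructor
  · intro h
    rw [Submodule.eq_of_le_of_finrank_eq hle (h.trans hspan.symm)]
    exact ⟨Submodule.subset_span (by simp), Submodule.subset_span (by simp)⟩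
  · rintro ⟨hu, hw⟩
    rw [le_antisymm hle (Submodule.span_le.mpr (Set.pair_subset hu hw)), hspan]

theorem mem_ker_dicksonMatrix_iff (hσ : ∀ x, σ (σ (σ (σ x))) = x) :
    ![b0, b0 * σ b0, 0, 1 - b1 * σ b0] ∈ ker (dicksonMatrix σ b0 b1).mulVecLin ∧
      ![0, b0 * σ b1, b0, -(b1 * σ b1)] ∈ ker (dicksonMatrix σ b0 b1).mulVecLin ↔
      b0 * σ b0 + σ b1 * σ (σ b1) = 0 ∧ b1 * σ b0 + σ (σ b0) * σ b1 = 1 := by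
  have hP1 : σ (σ (σ (σ b0)) * b0 + b1 * σ b1) = b0 * σ b0 + σ b1 * σ (σ b1) := by
    simp [hσ, mul_comm]
  have hP2 : σ (σ (σ (σ b1)) * b0 + b1 * σ b0) = b1 * σ b0 + σ (σ b0) * σ b1 := by
    simp [hσ, mul_comm]
  simp only [mem_ker_dicksonMatrix, Matrix.cons_val]
  constructor
  · rintro ⟨⟨-, -, -, h3u⟩, -, -, -, h3w⟩
    rw [← hP1, ← hP2, show σ (σ (σ b0)) * b0 + b1 * σ b1 = 0 by linear_combination h3w,
      show σ (σ (σ b1)) * b0 + b1 * σ b0 = 1 by linear_combination h3u, map_zero, map_one]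
    exact ⟨rfl, rfl⟩
  · rintro ⟨p1, p2⟩
    have h3w : σ (σ (σ b0)) * b0 + b1 * σ b1 = 0 := σ.injective (by rw [hP1, p1, map_zero])
    have h3u : σ (σ (σ b1)) * b0 + b1 * σ b0 = 1 := σ.injective (by rw [hP2, p2, map_one])
    exact ⟨⟨by ring, by ring, by linear_combination σ (σ b0) * p1 - σ (σ b1) * p2,
      by linear_combination h3u⟩, by ring, by ring, by linear_combination b0 * p2 - b1 * p1,
      by linear_combination h3w⟩

theorem dickson_system_iff_norm_eq_one {z : F} (hz : z ≠ 0) (hb0 : b0 = z * b1) :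
    b0 * σ b0 + σ b1 * σ (σ b1) = 0 ∧ b1 * σ b0 + σ (σ b0) * σ b1 = 1 ↔
      z * σ z * σ (σ z) * σ (σ (σ z)) = 1 ∧ b1 * σ b1 * (σ z - z * σ z * σ (σ z)) = 1 := by
  subst hb0
  simp only [map_mul]
  have hσT : b1 * σ b1 * (σ z - z * σ z * σ (σ z)) = 1 →
      σ b1 * σ (σ b1) * (σ (σ z) - σ z * σ (σ z) * σ (σ (σ z))) = 1 := fun hT ↦ by
    simpa using congrArg σ hT
  constructor
  · rintro ⟨p1, p2⟩
    have hT : b1 * σ b1 * (σ z - z * σ z * σ (σ z)) = 1 := by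
      linear_combination p2 - σ (σ z) * p1
    have hN : b1 * σ b1 * σ z * (1 - z * σ z * σ (σ z) * σ (σ (σ z))) = 0 := by
      linear_combination hT + (σ (σ z) - σ z * σ (σ z) * σ (σ (σ z))) * p1 - hσT hT
    have hβ : b1 * σ b1 * σ z ≠ 0 :=
      mul_ne_zero (left_ne_zero_of_mul_eq_one hT) ((map_ne_zero σ).mpr hz)
    exact ⟨by linear_combination -(mul_eq_zero.mp hN).resolve_left hβ, hT⟩
  · rintro ⟨hN, hT⟩
    have hw : (σ z - z * σ z * σ (σ z)) * (σ (σ z) - σ z * σ (σ z) * σ (σ (σ z))) ≠ 0 :=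
      mul_ne_zero (right_ne_zero_of_mul_eq_one hT) (right_ne_zero_of_mul_eq_one (hσT hT))
    have p1 : z * b1 * (σ z * σ b1) + σ b1 * σ (σ b1) = 0 := by
      refine (mul_eq_zero.mp ?_).resolve_right hw
      linear_combination z * σ z * (σ (σ z) - σ z * σ (σ z) * σ (σ (σ z))) * hT
        + (σ z - z * σ z * σ (σ z)) * hσT hT - σ z * hN
    exact ⟨p1, by linear_combination hT + σ (σ z) * p1⟩

end DicksonMatrix

theorem stmt_15 (q : ℕ) (Fq F : Type*) [Field Fq] [Field F] [Algebra Fq F]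
    [Fintype Fq] [Fintype F]
    (hq : Fintype.card Fq = q) (hF : Fintype.card F = q ^ 4)
    (b0 b1 : F) (hb0 : b0 ≠ 0) (hb1 : b1 ≠ 0)
    (z : F) (hz : z = b0 / b1)
    (f : F →ₗ[Fq] F)
    (hf : ∀ x, f x = -x + b0 * x ^ q ^ 3 + b1 * x ^ q) :
    (Module.finrank Fq (LinearMap.ker f) = 2 ↔
      (z ^ (1 + q + q ^ 2 + q ^ 3) = 1 ∧
        b1 ^ (q + 1) = 1 / (z ^ q - z ^ (q ^ 2 + q + 1)))) ∧
    ((z ^ (1 + q + q ^ 2 + q ^ 3) = 1 ∧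
        b1 ^ (q + 1) = 1 / (z ^ q - z ^ (q ^ 2 + q + 1))) →
      z ^ (q ^ 2 + 1) ≠ 1) := by
  set φ := frobeniusAlgHom Fq F
  have hφ : ∀ x, φ x = x ^ q := fun x ↦ by simp [φ, hq]
  have hφ4 : ∀ x, φ (φ (φ (φ x))) = x := fun x ↦ by
    simp only [hφ, ← pow_mul]
    rw [show q * q * q * q = Fintype.card F by rw [hF]; ring, FiniteField.pow_card]
  have hfφ : ∀ y, f y = -y + b1 * φ y + b0 * φ (φ (φ y)) := fun y ↦ by
    rw [hf, hφ, hφ, hφ]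
    ring
  have hker :
      finrank Fq (ker f) = finrank F (ker (dicksonMatrix φ.toRingHom b0 b1).mulVecLin) :=
    finrank_ker_eq_finrank_ker_of_dickson (finrank_eq_of_card_eq_pow hq hF) f _ fun i y ↦ by
      rw [hfφ]
      exact sum_dicksonMatrix_mul_pow_apply hφ4 b0 b1 y i
  have hden : ∀ c : F, b1 ^ (q + 1) = 1 / c → c ≠ 0 := fun c h hc ↦ by simp [hc, hb1] at h
  refine ⟨?_, fun ⟨_, hT⟩ hz2 ↦ hden _ hT (by linear_combination (-z ^ q) * hz2)⟩
  rw [hker, finrank_ker_dicksonMatrix_eq_two_iff_mem hb0, mem_ker_dicksonMatrix_iff hφ4,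
    dickson_system_iff_norm_eq_one (hz ▸ div_ne_zero hb0 hb1)
      (by rw [hz, div_mul_cancel₀ _ hb1])]
  simp only [AlgHom.toRingHom_eq_coe, AlgHom.coe_toRingHom, hφ]
  rw [show z * z ^ q * (z ^ q) ^ q * ((z ^ q) ^ q) ^ q = z ^ (1 + q + q ^ 2 + q ^ 3) by ring,
    show b1 * b1 ^ q * (z ^ q - z * z ^ q * (z ^ q) ^ q)
      = b1 ^ (q + 1) * (z ^ q - z ^ (q ^ 2 + q + 1)) by ring]
  exact Iff.rfl.and
    ⟨eq_one_div_of_mul_eq_one_left, fun h ↦ by rw [h, one_div_mul_cancel (hden _ h)]⟩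
end

section
/- Let F(x) = a₀x^σ + a₁x^{σq^n} + ... + a_{t-1}x^{σq^{n(t-1)}} over F_{q^{nt}}, with σ a generator of Gal(F_{q^n}/F_q), G(x) = Σ a_i x^{q^{ni}}, and let L_F = {⟨(x,F(x))⟩_{F_{q^{nt}}} : x ∈ F_{q^{nt}}*} be the associated F_q-linear set of PG(1, q^{nt}). Then the weight of the point ⟨(1,0)⟩ equals n·dim_{F_{q^n}} ker G, and every other point of L_F has weight between 1 and t - dim_{F_{q^n}} ker G. -/
/-!
Since `F(x) = G(x^σ)`, `ker F` is the preimage under `σ` of the `𝔽_{q^n}`-subspace `ker G`.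
For `m ≠ 0`, the solutions of `F(x) = m x` are the fixed points of the `σ'`-semilinear map
`x ↦ m⁻¹ G(x^σ)`. Because `σ'` generates `Gal(𝔽_{q^n}/𝔽_q)`, its only fixed scalars lie in `𝔽_q`,
so `𝔽_q`-independent fixed points stay `𝔽_{q^n}`-independent (the linear-algebra core of
Hilbert 90). They lie in the range of `x ↦ m⁻¹ G(x)`, which has dimension `t - dim ker G`.
-/

open Module Submodule

theorem Module.finrank_eq_of_card_eq_pow {k V : Type*} [Field k] [Fintype k] [AddCommGroup V]
    [Module k V] [Fintype V] {d : ℕ} (h : Fintype.card V = Fintype.card k ^ d) :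
    finrank k V = d :=
  Nat.pow_right_injective (Nat.succ_le_of_lt Fintype.one_lt_card) (card_eq_pow_finrank.symm.trans h)

theorem Submodule.finrank_restrictScalars (k : Type*) {K V : Type*} [Field k] [Field K]
    [Algebra k K] [AddCommGroup V] [Module K V] [Module k V] [IsScalarTower k K V]
    [FiniteDimensional k K] (p : Submodule K V) [FiniteDimensional K p] :
    finrank k (p.restrictScalars k) = finrank k K * finrank K p := by
  rw [Module.finrank_mul_finrank k K p]
  exact ((restrictScalarsEquiv k K V p).restrictScalars k).finrank_eq

theorem mem_range_algebraMap_of_orderOf_eq_finrank {k K : Type*} [Field k] [Field K]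
    [Algebra k K] [FiniteDimensional k K] [IsGalois k K] {g : K ≃ₐ[k] K}
    (hg : orderOf g = finrank k K) {c : K} (hc : g c = c) : c ∈ Set.range (algebraMap k K) := by
  have htop : Subgroup.zpowers g = ⊤ := by
    rw [← Subgroup.card_eq_iff_eq_top, Nat.card_zpowers, hg, IsGalois.card_aut_eq_finrank]
  have hstab : Subgroup.zpowers g ≤ MulAction.stabilizer (K ≃ₐ[k] K) c :=
    Subgroup.zpowers_le.mpr hc
  rw [IsGalois.mem_range_algebraMap_iff_fixed]
  exact fun f => hstab (htop ▸ Subgroup.mem_top f)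

section SemilinearFixedPoints

variable {k K V : Type*} [Field k] [Field K] [Algebra k K] [AddCommGroup V] [Module K V]
  [Module k V] [IsScalarTower k K V] {σ : K →+* K}

theorem mem_span_image_of_isFixedPt (hσ : ∀ c, σ c = c → c ∈ Set.range (algebraMap k K))
    {ψ : V →ₛₗ[σ] V} {ι : Type*} {x : ι → V} {s : Finset ι} (hx : ∀ i, ψ (x i) = x i)
    (hs : LinearIndepOn K x s) {v : V} (hv : ψ v = v) (hmem : v ∈ span K (x '' s)) :
    v ∈ span k (x '' s) := by
  obtain ⟨c, rfl⟩ := (mem_span_image_finset_iff_exists_fun K).mp hmem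
  have hψ : ∑ i, σ (c i) • x i = ∑ i, c i • x i := by
    simpa only [map_sum, map_smulₛₗ, hx] using hv
  have hc : ∀ i, σ (c i) = c i :=
    Fintype.linearIndependent_iffₛ.mp hs _ _ (by convert hψ)
  choose b hb using fun i => hσ (c i) (hc i)
  refine (mem_span_image_finset_iff_exists_fun k).mpr ⟨b, ?_⟩
  simp only [← hb, algebraMap_smul]

theorem LinearIndependent.of_isFixedPt_semilinear
    (hσ : ∀ c, σ c = c → c ∈ Set.range (algebraMap k K))
    {ψ : V →ₛₗ[σ] V} {ι : Type*} {x : ι → V} (hx : ∀ i, ψ (x i) = x i)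
    (hli : LinearIndependent k x) : LinearIndependent K x := by
  classical
  rw [linearIndependent_iff_finset_linearIndependent]
  intro s
  have hs : LinearIndepOn k x s := hli.linearIndepOn s
  show LinearIndepOn K x s
  induction s using Finset.induction_on with
  | empty => simp
  | insert a s has ih =>
    rw [Finset.coe_insert, linearIndepOn_insert (by simpa using has)] at hs ⊢
    exact ⟨ih hs.1, fun hmem => hs.2 (mem_span_image_of_isFixedPt hσ hx (ih hs.1) (hx a) hmem)⟩

theorem finrank_le_of_isFixedPt [FiniteDimensional K V]
    (hσ : ∀ c, σ c = c → c ∈ Set.range (algebraMap k K)) {ψ : V →ₛₗ[σ] V}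
    (E : Submodule k V) [FiniteDimensional k E] (hE : ∀ z ∈ E, ψ z = z)
    (W : Submodule K V) (hEW : ∀ z ∈ E, z ∈ W) : finrank k E ≤ finrank K W := by
  let b := finBasis k E
  have hli : LinearIndependent K fun i => (b i : V) :=
    (b.linearIndependent.map' E.subtype E.ker_subtype).of_isFixedPt_semilinear hσ
      fun i => hE _ (b i).2
  have hliW : LinearIndependent K fun i => (⟨b i, hEW _ (b i).2⟩ : W) :=
    LinearIndependent.of_comp W.subtype hli
  simpa using hliW.fintype_card_le_finrank

end SemilinearFixedPoints

theorem finrank_le_sub_finrank_ker_of_apply_eq_mul {k K F : Type*} [Field k] [Field K] [Field F]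
    [Algebra k K] [Algebra K F] [Algebra k F] [IsScalarTower k K F] [FiniteDimensional K F]
    (σ : F ≃ₐ[k] F) (σ' : K ≃ₐ[k] K)
    (hres : ∀ c : K, σ (algebraMap K F c) = algebraMap K F (σ' c))
    (hσ' : ∀ c, σ' c = c → c ∈ Set.range (algebraMap k K))
    (G : F →ₗ[K] F) {m : F} (hm : m ≠ 0)
    (E : Submodule k F) [FiniteDimensional k E] (hE : ∀ z ∈ E, G (σ z) = m * z) :
    finrank k E ≤ finrank K F - finrank K (LinearMap.ker G) := by
  let G' := LinearMap.mulLeft K m⁻¹ ∘ₗ G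
  let ψ : F →ₛₗ[(σ' : K →+* K)] F :=
    { toFun := fun z => G' (σ z)
      map_add' := by simp
      map_smul' := fun c z => by
        simp only [Algebra.smul_def, map_mul, hres, RingHom.coe_coe]
        rw [← Algebra.smul_def, map_smul]
        exact Algebra.smul_def _ _ }
  have hker : LinearMap.ker G' = LinearMap.ker G :=
    LinearMap.ker_comp_of_ker_eq_bot _
      (LinearMap.ker_eq_bot.mpr (mul_right_injective₀ (inv_ne_zero hm)))
  have hfix : ∀ z ∈ E, ψ z = z := fun z hz => by
    simp [ψ, G', hE z hz, inv_mul_cancel_left₀ hm]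
  have hrange : ∀ z ∈ E, z ∈ LinearMap.range G' := fun z hz => ⟨σ z, hfix z hz⟩
  have hE_le := finrank_le_of_isFixedPt hσ' E hfix _ hrange
  have hrank := G'.finrank_range_add_finrank_ker
  rw [hker] at hrank
  omega

theorem stmt_18 (q n t : ℕ) (Fq Fqn F : Type*) [Field Fq] [Field Fqn] [Field F]
    [Algebra Fq Fqn] [Algebra Fqn F] [Algebra Fq F] [IsScalarTower Fq Fqn F]
    [Fintype Fq] [Fintype Fqn] [Fintype F]
    (hq : Fintype.card Fq = q) (hqn : Fintype.card Fqn = q ^ n)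
    (hF : Fintype.card F = q ^ (n * t))
    (σ : F ≃ₐ[Fq] F) (σ' : Fqn ≃ₐ[Fq] Fqn) (hord : orderOf σ' = n)
    (hres : ∀ c : Fqn, σ (algebraMap Fqn F c) = algebraMap Fqn F (σ' c))
    (a : Fin t → F)
    (G : F →ₗ[Fqn] F)
    (hG : ∀ x, G x = ∑ i : Fin t, a i * x ^ q ^ (n * (i : ℕ)))
    (Fl : F →ₗ[Fq] F)
    (hFl : ∀ x, Fl x = ∑ i : Fin t, a i * σ x ^ q ^ (n * (i : ℕ)))
    (fm : F → (F →ₗ[Fq] F))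
    (hfm : ∀ m x, fm m x = Fl x - m * x) :
    Module.finrank Fq (LinearMap.ker Fl) = n * Module.finrank Fqn (LinearMap.ker G) ∧
      ∀ m : F, m ≠ 0 → (∃ x : F, x ≠ 0 ∧ Fl x = m * x) →
        1 ≤ Module.finrank Fq (LinearMap.ker (fm m)) ∧
          Module.finrank Fq (LinearMap.ker (fm m)) ≤
            t - Module.finrank Fqn (LinearMap.ker G) := by
  have hFqn : finrank Fq Fqn = n := finrank_eq_of_card_eq_pow (hq ▸ hqn)
  have hFqnF : finrank Fqn F = t := finrank_eq_of_card_eq_pow (by rw [hF, hqn, pow_mul])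
  have hFl_eq : Fl = G.restrictScalars Fq ∘ₗ (σ.toLinearEquiv : F →ₗ[Fq] F) :=
    LinearMap.ext fun z => by simp [hFl, hG]
  have hmem : ∀ m z, z ∈ LinearMap.ker (fm m) ↔ G (σ z) = m * z := fun m z => by
    rw [LinearMap.mem_ker, hfm, sub_eq_zero, hFl_eq]; rfl
  refine ⟨?_, fun m hm ⟨x, hx0, hxm⟩ => ⟨?_, ?_⟩⟩
  · rw [hFl_eq, LinearMap.ker_comp, Submodule.comap_equiv_eq_map_symm,
      LinearEquiv.finrank_map_eq, LinearMap.ker_restrictScalars, finrank_restrictScalars, hFqn]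
  · refine Submodule.one_le_finrank_iff.mpr ((Submodule.ne_bot_iff _).mpr ⟨x, ?_, hx0⟩)
    rw [hmem, ← hxm, hFl_eq]; rfl
  · rw [← hFqnF]
    exact finrank_le_sub_finrank_ker_of_apply_eq_mul σ σ' hres
      (fun c hc => mem_range_algebraMap_of_orderOf_eq_finrank (hord.trans hFqn.symm) hc)
      G hm _ fun z hz => (hmem m z).mp hz
end
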